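/- Let S be a minor subset of the flat torus ℝⁿ/ℤⁿ, let p ∈ S, and let t ∈ ℝⁿ/ℤⁿ with t ≠ 0. Then the forward orbit of p under translation by t is not contained in S; that is, there exists an integer k > 0 such that p + k·t ∉ S. -/

import Mathlib

/-- The flat torus `ℝⁿ/ℤⁿ`, modelled as the product of `n` copies of `ℝ/ℤ`. -/
abbrev FlatTorus (n : ℕ) := Fin n → AddCircle (1 : ℝ)

/-- The quotient map `π : ℝⁿ → ℝⁿ/ℤⁿ`. -/
noncomputable def torusProj (n : ℕ) (v : Fin n → ℝ) : FlatTorus n := fun i => (v i : AddCircle (1 : ℝ))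

/-- A subset `S` of `ℝⁿ/ℤⁿ` is *minor* if some translate of `S` is contained in the
image of the open cube `(0, 1/2)ⁿ` under the quotient map. -/
def Minor {n : ℕ} (S : Set (FlatTorus n)) : Prop :=
  ∃ c : FlatTorus n,
    (fun s => s + c) '' S ⊆ torusProj n '' {v | ∀ i, v i ∈ Set.Ioo (0 : ℝ) (1 / 2)}

/-!
Let `S + c ⊆ π((0, 1/2)ⁿ)` and pick a coordinate `i` with `tᵢ ≠ 0`. If the whole forward
orbit stayed in `S`, the points `pᵢ + cᵢ + k tᵢ` (`k ≥ 1`) would have lifts `x_k` in `(0, 1/2)`,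
an interval of half the period. Consecutive differences `x_{k+1} - x_k` then lie in
`(-1/2, 1/2)` and all represent `tᵢ`, so they are one and the same real `d`. The lifts form the
arithmetic progression `x_0 + k d`, which stays bounded only if `d = 0`, i.e. `tᵢ = 0`.
-/

open Set

section

variable {𝕜 : Type*} [Field 𝕜] [LinearOrder 𝕜] [IsStrictOrderedRing 𝕜] [Archimedean 𝕜]

theorem eq_zero_of_forall_add_nsmul_mem_Ioo {x d a b : 𝕜} (h : ∀ k : ℕ, x + k • d ∈ Ioo a b) :
    d = 0 := by
  by_contra hd
  obtain ⟨k, hk⟩ := Archimedean.arch (b - a) (abs_pos.mpr hd)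
  have hx := h 0
  have hxk := h k
  simp only [mem_Ioo, zero_smul, add_zero, nsmul_eq_mul] at hx hxk hk
  rcases abs_cases d with ⟨hda, -⟩ | ⟨hda, -⟩ <;> rw [hda] at hk <;> linarith

namespace AddCircle

variable {p : 𝕜} [Fact (0 < p)]

theorem sub_eq_sub_of_coe_sub_eq {a b x y z w : 𝕜} (hab : 2 * (b - a) ≤ p)
    (hx : x ∈ Ioo a b) (hy : y ∈ Ioo a b) (hz : z ∈ Ioo a b) (hw : w ∈ Ioo a b)
    (h : ((x - y : 𝕜) : AddCircle p) = (z - w : 𝕜)) : x - y = z - w := by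
  rw [coe_eq_coe_iff_of_mem_Ico (a := a - b)] at h
  · exact h
  all_goals constructor <;> linarith [hx.1, hx.2, hy.1, hy.2, hz.1, hz.2, hw.1, hw.2]

theorem exists_add_nsmul_notMem_image_Ioo {a b : 𝕜} (hab : 2 * (b - a) ≤ p)
    (u : AddCircle p) {t : AddCircle p} (ht : t ≠ 0) :
    ∃ k : ℕ, 0 < k ∧ u + k • t ∉ ((↑) : 𝕜 → AddCircle p) '' Ioo a b := by
  by_contra! hmem
  choose x hx hxu using fun k : ℕ => hmem (k + 1) k.succ_pos
  have hdiff (k : ℕ) : ((x (k + 1) - x k : 𝕜) : AddCircle p) = t := by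
    rw [coe_sub, hxu, hxu, add_nsmul, one_nsmul]; abel
  set d := x 1 - x 0
  have hstep (k : ℕ) : x (k + 1) - x k = d :=
    sub_eq_sub_of_coe_sub_eq hab (hx _) (hx _) (hx _) (hx _) (by rw [hdiff, hdiff])
  have hprog (k : ℕ) : x 0 + k • d = x k := by
    induction k with
    | zero => simp
    | succ k ih => rw [succ_nsmul, ← add_assoc, ih, ← hstep k, add_sub_cancel]
  have hd : d = 0 := eq_zero_of_forall_add_nsmul_mem_Ioo fun k => hprog k ▸ hx k
  exact ht (by rw [← hdiff 0, hstep, hd, coe_zero])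

end AddCircle

end

theorem minor_forward_orbit_escapes_general {n : ℕ} (S : Set (FlatTorus n)) (hS : Minor S)
    (p : FlatTorus n) (t : FlatTorus n) (ht : t ≠ 0) :
    ∃ k : ℕ, 0 < k ∧ p + k • t ∉ S := by
  obtain ⟨c, hc⟩ := hS
  obtain ⟨i, hi⟩ := Function.ne_iff.mp ht
  obtain ⟨k, hk, hk_out⟩ :=
    AddCircle.exists_add_nsmul_notMem_image_Ioo (a := 0) (b := 1 / 2) (by norm_num) (p i + c i) hi
  refine ⟨k, hk, fun hmem => hk_out ?_⟩
  obtain ⟨v, hv, hv_eq⟩ := hc (mem_image_of_mem _ hmem)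
  refine ⟨v i, hv i, ?_⟩
  rw [show (v i : AddCircle (1 : ℝ)) = (p + k • t + c) i from congrFun hv_eq i]
  simp only [Pi.add_apply, Pi.smul_apply]
  abel

/-- If `S` is a minor subset of the flat torus, `p ∈ S`, and `t ≠ 0`, then the forward
orbit of `p` under translation by `t` is not contained in `S`. -/
theorem minor_forward_orbit_escapes {n : ℕ} (S : Set (FlatTorus n)) (hS : Minor S)
    (p : FlatTorus n) (hp : p ∈ S) (t : FlatTorus n) (ht : t ≠ 0) :
    ∃ k : ℕ, 0 < k ∧ p + k • t ∉ S :=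
  minor_forward_orbit_escapes_general S hS p t ht
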